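/- The generalized ZH-monoid acts on standard basis vectors by Hamming weight: for every n ≥ 1 and every bitstring x : Fin n → Fin 2, Mₙ applied to the basis vector e_x equals |0⟩ if x is identically 0, equals |1⟩ if x has exactly one coordinate equal to 1, and equals 0 otherwise. -/

import Mathlib

open Kronecker Matrix

/-- The ZH-monoid `M`, determined on the standard basis by
`M|00⟩ = |0⟩`, `M|01⟩ = |1⟩`, `M|10⟩ = |1⟩`, `M|11⟩ = 0`. -/
def ZHmonoid : Matrix (Fin 2) (Fin 2 × Fin 2) ℂ :=
  Matrix.of fun i p =>
    if p = (0, 0) then ![1, 0] i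
    else if p = (1, 1) then 0
    else ![0, 1] i

/-- The generalized ZH-monoid `Mₙ`, defined inductively by `M₁ = I₂` and
`M_{n+1} = M * (I₂ ⊗ₖ Mₙ)`, using the canonical identification of
`Fin 2 × (Fin n → Fin 2)` with `Fin (n+1) → Fin 2`. -/
noncomputable def genMonoid : (n : ℕ) → Matrix (Fin 2) (Fin n → Fin 2) ℂ
  | 0 => Matrix.of fun i _ => if i = 0 then 1 else 0
  | 1 => Matrix.reindex (Equiv.refl (Fin 2)) (Equiv.funUnique (Fin 1) (Fin 2)).symm 1
  | (n + 2) =>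
    Matrix.reindex (Equiv.refl (Fin 2)) (Fin.consEquiv fun _ => Fin 2)
      (ZHmonoid * ((1 : Matrix (Fin 2) (Fin 2) ℂ) ⊗ₖ genMonoid (n + 1)))
  termination_by n => n

/-!
Write `|x|` for the Hamming weight of a bitstring and let `ket k` be `|k⟩` for `k ≤ 1` and `0`
for `k ≥ 2`. The column of `ZHmonoid` at `(a, b)` is `ket (a + b)`, and
`∑ c, ket (a + c) * (ket w) c = ket (a + w)` for every `w`, both sides vanishing when `w ≥ 2`.
Since `|Fin.cons a t| = a + |t|`, induction on `n` shows that the column of `genMonoid n` at `x`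
is `ket |x|`.
-/

theorem hammingNorm_cons {β : Type*} [Zero β] [DecidableEq β] {n : ℕ} (a : β) (t : Fin n → β) :
    hammingNorm (Fin.cons a t : Fin (n + 1) → β) = (if a = 0 then 0 else 1) + hammingNorm t := by
  simp only [hammingNorm, Finset.card_filter, Fin.sum_univ_succ, Fin.cons_zero, Fin.cons_succ,
    ite_not]

theorem hammingNorm_cons_fin_two {n : ℕ} (a : Fin 2) (t : Fin n → Fin 2) :
    hammingNorm (Fin.cons a t : Fin (n + 1) → Fin 2) = a + hammingNorm t := by
  rw [hammingNorm_cons]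
  congr 1
  fin_cases a <;> rfl

theorem hammingNorm_eq_one_iff {ι : Type*} [Fintype ι] {β : ι → Type*} [∀ i, Zero (β i)]
    [∀ i, DecidableEq (β i)] {x : ∀ i, β i} : hammingNorm x = 1 ↔ ∃! i, x i ≠ 0 :=
  (Fintype.existsUnique_iff_card_one _).symm

def ket (k : ℕ) : Fin 2 → ℂ := fun i => if (i : ℕ) = k then 1 else 0

theorem ket_zero : ket 0 = ![1, 0] := by
  ext i; fin_cases i <;> simp [ket]

theorem ket_one : ket 1 = ![0, 1] := by
  ext i; fin_cases i <;> simp [ket]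

theorem ket_of_two_le {k : ℕ} (hk : 2 ≤ k) : ket k = 0 := by
  ext i; exact if_neg (by omega)

theorem sum_ket_add_mul_ket (a w : ℕ) (i : Fin 2) :
    ∑ c : Fin 2, ket (a + c) i * ket w c = ket (a + w) i := by
  have hi := i.isLt
  simp only [ket, Fin.sum_univ_two, Fin.val_zero, Fin.val_one]
  split_ifs <;> first | omega | norm_num

theorem ZHmonoid_apply (i a b : Fin 2) : ZHmonoid i (a, b) = ket (a + b) i := by
  fin_cases i <;> fin_cases a <;> fin_cases b <;> simp [ZHmonoid, ket]

theorem genMonoid_apply_cons (n : ℕ) (i a : Fin 2) (t : Fin (n + 1) → Fin 2) :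
    genMonoid (n + 2) i (Fin.cons a t) = ∑ c, ZHmonoid i (a, c) * genMonoid (n + 1) c t := by
  have hsymm : (Fin.consEquiv fun _ => Fin 2).symm (Fin.cons a t) = (a, t) :=
    (Equiv.symm_apply_eq _).2 rfl
  rw [genMonoid.eq_3]
  simp [hsymm, Matrix.mul_apply, Fintype.sum_prod_type, Matrix.one_apply]

theorem genMonoid_apply : ∀ (n : ℕ) (i : Fin 2) (x : Fin n → Fin 2),
    genMonoid n i x = ket (hammingNorm x) i
  | 0, i, x => by
    rw [genMonoid.eq_1, hammingNorm_eq_zero.2 (Subsingleton.elim x 0)]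
    simp [ket, Fin.val_eq_zero_iff]
  | 1, i, x => by
    rw [genMonoid.eq_2, ← Fin.cons_self_tail x, hammingNorm_cons_fin_two,
      hammingNorm_eq_zero.2 (Subsingleton.elim (Fin.tail x) 0)]
    simp [ket, Matrix.one_apply, Fin.val_inj]
  | n + 2, i, x => by
    rw [← Fin.cons_self_tail x, genMonoid_apply_cons, hammingNorm_cons_fin_two,
      ← sum_ket_add_mul_ket]
    simp only [ZHmonoid_apply, genMonoid_apply (n + 1)]

open Classical in
theorem genMonoid_apply_basis_general (n : ℕ) (x : Fin n → Fin 2) :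
    (genMonoid n).mulVec (fun y => if y = x then 1 else 0) =
      if ∀ i, x i = 0 then ![1, 0]
      else if ∃! i, x i = 1 then ![0, 1]
      else 0 := by
  have hcol : (genMonoid n).mulVec (fun y => if y = x then 1 else 0) = ket (hammingNorm x) := by
    ext i
    simp [Matrix.mulVec, dotProduct, genMonoid_apply]
  have hone : (∃! i, x i = 1) ↔ hammingNorm x = 1 := by
    rw [hammingNorm_eq_one_iff]
    exact existsUnique_congr fun i => by omega
  rw [hcol]
  split_ifs with h0 h1
  · rw [hammingNorm_eq_zero.2 (funext h0), ket_zero]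
  · rw [hone.1 h1, ket_one]
  · refine ket_of_two_le ?_
    have : hammingNorm x ≠ 0 := fun h => h0 (congrFun (hammingNorm_eq_zero.1 h))
    have : hammingNorm x ≠ 1 := fun h => h1 (hone.2 h)
    omega

open Classical in
/-- The generalized ZH-monoid acts on standard basis vectors by Hamming weight:
for every `n ≥ 1` and bitstring `x : Fin n → Fin 2`, `Mₙ e_x` equals `|0⟩` if `x` is
identically `0`, equals `|1⟩` if `x` has exactly one coordinate equal to `1`, and
equals `0` otherwise. -/
theorem genMonoid_apply_basis (n : ℕ) (hn : 1 ≤ n) (x : Fin n → Fin 2) :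
    (genMonoid n).mulVec (fun y => if y = x then 1 else 0) =
      if ∀ i, x i = 0 then ![1, 0]
      else if ∃! i, x i = 1 then ![0, 1]
      else 0 :=
  genMonoid_apply_basis_general n x
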